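/- Let Ω ⊂ ℍₛⁿ be a slice-domain (slice-open and slice-connected in the slice topology) with Ω ∩ ℝⁿ ≠ ∅. Then Ω is real-path-connected: for every q ∈ Ω there exist γ ∈ 𝒫(ℂⁿ, Ω) and I ∈ 𝕊(Ω, γ) with γ^I(1) = q. -/

import Mathlib

noncomputable section
open Quaternion Matrix

abbrev Hq := Quaternion ℝ

/-- The set of quaternionic imaginary units. -/
def Sph : Set Hq := {I | I ^ 2 = -1}

/-- `Ψ_i^I` applied to a single complex number: `x + y i ↦ x + y I`. -/
def psi (I : Hq) (z : ℂ) : Hq := (z.re : Hq) + z.im • I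

/-- `Ψ_i^I : ℂⁿ → ℂ_Iⁿ`, componentwise. -/
def liftMap {n : ℕ} (I : Hq) (z : Fin n → ℂ) : Fin n → Hq := fun k => psi I (z k)

/-- The weakly slice cone `Hqₛⁿ = ⋃_{I∈𝕊} ℂ_Iⁿ`. -/
def HSn (n : ℕ) : Set (Fin n → Hq) := {q | ∃ I ∈ Sph, ∃ z : Fin n → ℂ, q = liftMap I z}

/-- A point of `ℂⁿ` is real. -/
def isRealPt {n : ℕ} (z : Fin n → ℂ) : Prop := ∀ k, (z k).im = 0

/-- A point of `Hqⁿ` is real. -/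
def isRealH {n : ℕ} (q : Fin n → Hq) : Prop := ∀ k, q k = ((q k).re : Hq)

/-- The lifted path `γ^I = Ψ_i^I ∘ γ`. -/
def liftP {n : ℕ} (γ : C(unitInterval, Fin n → ℂ)) (I : Hq) (t : unitInterval) : Fin n → Hq :=
  liftMap I (γ t)

/-- `𝕊(Ω, γ) = {I ∈ 𝕊 : γ^I ⊂ Ω}`. -/
def SUnits {n : ℕ} (Ω : Set (Fin n → Hq)) (γ : C(unitInterval, Fin n → ℂ)) : Set Hq :=
  {I | I ∈ Sph ∧ ∀ t, liftP γ I t ∈ Ω}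

/-- `𝒫(ℂⁿ, Ω)`: continuous paths starting in `ℝⁿ` with some lift inside `Ω`. -/
def PathsTo {n : ℕ} (Ω : Set (Fin n → Hq)) : Set C(unitInterval, Fin n → ℂ) :=
  {γ | isRealPt (γ 0) ∧ ∃ I, I ∈ SUnits Ω γ}

/-- `F` is a path-slice stem function of `f` on `Ω`:
`f(γ^I(1)) = (1, I)·F(γ)`. -/
def IsStem {n : ℕ} (Ω : Set (Fin n → Hq)) (f : (Fin n → Hq) → Hq)
    (F : C(unitInterval, Fin n → ℂ) → Fin 2 → Hq) : Prop :=
  ∀ γ ∈ PathsTo Ω, ∀ I ∈ SUnits Ω γ, f (liftP γ I 1) = F γ 0 + I * F γ 1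

/-- `f` is path-slice on `Ω`. -/
def IsPathSlice {n : ℕ} (Ω : Set (Fin n → Hq)) (f : (Fin n → Hq) → Hq) : Prop :=
  ∃ F, IsStem Ω f F

/-- `Ω` is real-path-connected. -/
def RealPathConnected {n : ℕ} (Ω : Set (Fin n → Hq)) : Prop :=
  ∀ q ∈ Ω, ∃ γ ∈ PathsTo Ω, ∃ I ∈ SUnits Ω γ, liftP γ I 1 = q

/-- `Ω₂` is `Ω₁`-stem-preserving: (i) every path of `𝒫(ℂⁿ,Ω₁)` has at least two
units in `𝕊(Ω₂,γ)`; (ii) two paths with the same endpoint share `≠ 1` units. -/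
def StemPreserving {n : ℕ} (Ω₁ Ω₂ : Set (Fin n → Hq)) : Prop :=
  (∀ γ ∈ PathsTo Ω₁, ∃ I ∈ SUnits Ω₂ γ, ∃ J ∈ SUnits Ω₂ γ, I ≠ J) ∧
  (∀ α ∈ PathsTo Ω₁, ∀ β ∈ PathsTo Ω₁, α 1 = β 1 →
    ∀ I ∈ SUnits Ω₂ α ∩ SUnits Ω₂ β, ∃ J ∈ SUnits Ω₂ α ∩ SUnits Ω₂ β, J ≠ I)

/-- The formula `((1,I),(1,J))⁻¹ (f(γ^I(1)), f(γ^J(1)))ᵀ`. -/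
def stemFormula {n : ℕ} (f : (Fin n → Hq) → Hq) (γ : C(unitInterval, Fin n → ℂ)) (I J : Hq) :
    Fin 2 → Hq :=
  ((I - J)⁻¹ • !![I, -J; (1 : Hq), -1]).mulVec ![f (liftP γ I 1), f (liftP γ J 1)]

/-- The sub-stem function `F_{Ω₁}^f` (depends only on `Ω₂` and `f`). -/
noncomputable def subStem {n : ℕ} (Ω₂ : Set (Fin n → Hq)) (f : (Fin n → Hq) → Hq)
    (γ : C(unitInterval, Fin n → ℂ)) : Fin 2 → Hq := by
  classical
  exact if h : ∃ p : Hq × Hq, p.1 ∈ SUnits Ω₂ γ ∧ p.2 ∈ SUnits Ω₂ γ ∧ p.1 ≠ p.2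
    then stemFormula f γ h.choose.1 h.choose.2
    else 0

/-- Normalized imaginary part of a quaternion. -/
def imUnit (a : Hq) : Hq := (‖a - (a.re : Hq)‖)⁻¹ • (a - (a.re : Hq))

/-- The map `𝔍 : Hqₛⁿ → 𝕊 ∪ {0}`. -/
noncomputable def Jmap {n : ℕ} (q : Fin n → Hq) : Hq := by
  classical
  exact if h : ∃ k : Fin n, q k ≠ ((q k).re : Hq) then
    imUnit (q ((Finset.univ.filter fun k => q k ≠ ((q k).re : Hq)).min'
      ⟨h.choose, Finset.mem_filter.2 ⟨Finset.mem_univ _, h.choose_spec⟩⟩))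
  else 0

/-- Componentwise complex conjugate of a path. -/
def conjPath {n : ℕ} (γ : C(unitInterval, Fin n → ℂ)) : C(unitInterval, Fin n → ℂ) :=
  ⟨fun t k => star (γ t k),
    continuous_pi fun k => continuous_star.comp ((continuous_apply k).comp γ.continuous)⟩

/-- The point-form sub-stem function `ℱ_{Ω₁}^f : Ω₁ → Hq^{2×1}`. -/
noncomputable def pointStem {n : ℕ} (Ω₁ Ω₂ : Set (Fin n → Hq)) (f : (Fin n → Hq) → Hq)
    (q : Fin n → Hq) : Fin 2 → Hq := by
  classical
  exact if isRealH q then ![f q, 0]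
    else if h : ∃ γ, γ ∈ PathsTo Ω₁ ∧ (∀ t, liftP γ (Jmap q) t ∈ Ω₁) ∧ liftP γ (Jmap q) 1 = q
    then subStem Ω₂ f h.choose
    else 0

/-- The `*`-product of functions: `(f*g)(q) = (f(q), 𝔍(q)f(q)) · ℱ_{Ω₁}^g(q)`. -/
noncomputable def starProd {n : ℕ} (Ω₁ Ω₂ : Set (Fin n → Hq)) (f g : (Fin n → Hq) → Hq)
    (q : Fin n → Hq) : Hq :=
  f q * pointStem Ω₁ Ω₂ g q 0 + (Jmap q * f q) * pointStem Ω₁ Ω₂ g q 1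

/-- The `*`-product on `Hq^{2×1}` coming from `Hq ⊗_ℝ ℂ`. -/
def vstar (p q : Fin 2 → Hq) : Fin 2 → Hq :=
  ![p 0 * q 0 - p 1 * q 1, p 1 * q 0 + p 0 * q 1]

/-- `Ω` is slice-open: a subset of `Hqₛⁿ` all of whose slices are open. -/
def SliceOpen {n : ℕ} (Ω : Set (Fin n → Hq)) : Prop :=
  Ω ⊆ HSn n ∧ ∀ I ∈ Sph, IsOpen {z : Fin n → ℂ | liftMap I z ∈ Ω}

/-- `Ω` is slice-connected. -/
def SliceConnected {n : ℕ} (Ω : Set (Fin n → Hq)) : Prop :=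
  ∀ U V : Set (Fin n → Hq), SliceOpen U → SliceOpen V → Ω ⊆ U ∪ V →
    (Ω ∩ U).Nonempty → (Ω ∩ V).Nonempty → (Ω ∩ U ∩ V).Nonempty

/-- `Ω` is a slice-domain. -/
def SliceDomain {n : ℕ} (Ω : Set (Fin n → Hq)) : Prop :=
  SliceOpen Ω ∧ SliceConnected Ω

/-- `Ω` is self-stem-preserving. -/
def SelfStemPreserving {n : ℕ} (Ω : Set (Fin n → Hq)) : Prop :=
  RealPathConnected Ω ∧ StemPreserving Ω Ω

/-- `Ω` is open in the Euclidean subspace topology of `Hqₛⁿ`. -/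
def EuclideanOpenIn {n : ℕ} (Ω : Set (Fin n → Hq)) : Prop :=
  ∃ U : Set (Fin n → Hq), IsOpen U ∧ Ω = U ∩ HSn n

/-- `Ω` is weakly axially symmetric. -/
def WeaklyAxiallySymmetric {n : ℕ} (Ω : Set (Fin n → Hq)) : Prop :=
  ∀ (x y : Fin n → ℝ) (I : Hq), I ∈ Sph →
    (fun k => (x k : Hq) + y k • I) ∈ Ω → (fun k => (x k : Hq) - y k • I) ∈ Ω
/-!
Let `R ⊆ Ω` be the set of endpoints of lifted paths `γ^I ⊂ Ω` starting at real points. In the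
slice `ℂ_Jⁿ`, `R` is the union of the path components of `Ω_J` that meet `ℝⁿ`: a point of
`ℂ_Jⁿ ∩ ℂ_Iⁿ` with `I ≠ ±J` is real, and `γ^{-J} = (γ̄)^J`. Since `ℂⁿ` is locally path-connected,
both `R` and `Ω \ R` are slice-open, and `R` contains a real point of `Ω`; slice-connectedness
forces `Ω \ R = ∅`.
-/

section Topology

variable {X : Type*} [TopologicalSpace X] [LocallyPathConnectedSpace X] {F : Set X}

theorem IsOpen.setOf_joinedIn (hF : IsOpen F) (S : Set X) :
    IsOpen {z | ∃ x ∈ S, JoinedIn F x z} := by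
  have : {z | ∃ x ∈ S, JoinedIn F x z} = ⋃ x ∈ S, pathComponentIn F x := by
    ext z; simp [pathComponentIn]
  rw [this]
  exact isOpen_biUnion fun x _ => hF.pathComponentIn x

theorem IsOpen.diff_setOf_joinedIn (hF : IsOpen F) (S : Set X) :
    IsOpen (F \ {z | ∃ x ∈ S, JoinedIn F x z}) := by
  refine isOpen_iff_forall_mem_open.2 fun z ⟨hzF, hz⟩ => ⟨pathComponentIn F z, ?_,
    hF.pathComponentIn z, mem_pathComponentIn_self hzF⟩
  intro w (hzw : JoinedIn F z w)
  exact ⟨hzw.mem.2, fun ⟨x, hxS, hxw⟩ => hz ⟨x, hxS, hxw.trans hzw.symm⟩⟩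

end Topology

section Units

variable {I J : Hq}

theorem norm_eq_one_of_mem_Sph (hI : I ∈ Sph) : ‖I‖ = 1 := by
  have : ‖I‖ ^ 2 = 1 := by rw [← norm_pow, hI, norm_neg, norm_one]
  nlinarith [norm_nonneg I]

theorem re_eq_zero_of_mem_Sph (hI : I ∈ Sph) : I.re = 0 := by
  rw [← Quaternion.sq_eq_neg_normSq, Quaternion.normSq_eq_norm_mul_self,
    norm_eq_one_of_mem_Sph hI, mul_one, Quaternion.coe_one]
  exact hI

theorem ne_zero_of_mem_Sph (hI : I ∈ Sph) : I ≠ 0 := by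
  rw [← norm_ne_zero_iff, norm_eq_one_of_mem_Sph hI]
  exact one_ne_zero

theorem psi_re (hI : I.re = 0) (z : ℂ) : (psi I z).re = z.re := by
  simp [psi, hI]

theorem psi_ofReal (I : Hq) (r : ℝ) : psi I r = r := by
  simp [psi]

theorem psi_neg (I : Hq) (z : ℂ) : psi (-I) z = psi I (star z) := by
  simp [psi]

theorem psi_injective (hI : I ∈ Sph) : Function.Injective (psi I) := by
  intro a b h
  have hre : a.re = b.re := by
    simpa only [psi_re (re_eq_zero_of_mem_Sph hI)] using congrArg QuaternionAlgebra.re h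
  have him : a.im • I = b.im • I := by
    simpa only [psi, hre, add_right_inj] using h
  exact Complex.ext hre (smul_left_injective ℝ (ne_zero_of_mem_Sph hI) him)

theorem eq_or_eq_neg_of_psi_eq (hI : I ∈ Sph) (hJ : J ∈ Sph) {a b : ℂ}
    (h : psi I a = psi J b) (hb : b.im ≠ 0) : I = J ∨ I = -J := by
  have hre : a.re = b.re := by
    simpa only [psi_re (re_eq_zero_of_mem_Sph hI), psi_re (re_eq_zero_of_mem_Sph hJ)]
      using congrArg QuaternionAlgebra.re h
  have him : a.im • I = b.im • J := by
    simpa only [psi, hre, add_right_inj] using h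
  have habs : |a.im| = |b.im| := by
    simpa [norm_smul, norm_eq_one_of_mem_Sph hI, norm_eq_one_of_mem_Sph hJ]
      using congrArg norm him
  rcases abs_eq_abs.1 habs with hab | hab
  · rw [hab] at him
    exact Or.inl (smul_right_injective Hq hb him)
  · rw [hab, neg_smul, ← smul_neg] at him
    exact Or.inr (neg_eq_iff_eq_neg.1 (smul_right_injective Hq hb him))

end Units

section Lifts

variable {n : ℕ} {I J : Hq}

theorem liftMap_injective (hI : I ∈ Sph) : Function.Injective (liftMap (n := n) I) :=
  fun _ _ h => funext fun k => psi_injective hI (congrFun h k)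

theorem liftMap_neg (I : Hq) (z : Fin n → ℂ) : liftMap (-I) z = liftMap I (star z) :=
  funext fun k => psi_neg I (z k)

theorem isRealPt.star_eq {x : Fin n → ℂ} (hx : isRealPt x) : star x = x :=
  funext fun k => Complex.conj_eq_iff_im.2 (hx k)

theorem isRealPt_of_isRealH_liftMap (hI : I ∈ Sph) {z : Fin n → ℂ}
    (h : isRealH (liftMap I z)) : isRealPt z := by
  intro k
  have : psi I (z k) = psi I ((z k).re : ℂ) := by
    rw [psi_ofReal, ← psi_re (re_eq_zero_of_mem_Sph hI)]
    exact h k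
  rw [psi_injective hI this, Complex.ofReal_im]

theorem liftMap_eq_liftMap_cases (hI : I ∈ Sph) (hJ : J ∈ Sph) {w z : Fin n → ℂ}
    (h : liftMap I w = liftMap J z) :
    isRealPt z ∨ (I = J ∧ w = z) ∨ (I = -J ∧ w = star z) := by
  by_cases hz : isRealPt z
  · exact Or.inl hz
  obtain ⟨k, hk⟩ := not_forall.1 hz
  rcases eq_or_eq_neg_of_psi_eq hI hJ (congrFun h k) hk with rfl | rfl
  · exact Or.inr (Or.inl ⟨rfl, liftMap_injective hI h⟩)
  · rw [liftMap_neg] at h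
    exact Or.inr (Or.inr ⟨rfl, by rw [← liftMap_injective hJ h, star_star]⟩)

end Lifts

section Reach

variable {n : ℕ} {Ω : Set (Fin n → Hq)} {J : Hq}

def realReach (Ω : Set (Fin n → Hq)) : Set (Fin n → Hq) :=
  {q | ∃ γ ∈ PathsTo Ω, ∃ I ∈ SUnits Ω γ, liftP γ I 1 = q}

def sliceReach (Ω : Set (Fin n → Hq)) (J : Hq) : Set (Fin n → ℂ) :=
  {z | ∃ x ∈ {x | isRealPt x}, JoinedIn (liftMap J ⁻¹' Ω) x z}

theorem realReach_subset : realReach Ω ⊆ Ω := by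
  rintro _ ⟨γ, -, I, hI, rfl⟩
  exact hI.2 1

theorem joinedIn_of_mem_SUnits {γ : C(unitInterval, Fin n → ℂ)} {I : Hq}
    (hI : I ∈ SUnits Ω γ) : JoinedIn (liftMap I ⁻¹' Ω) (γ 0) (γ 1) :=
  ⟨⟨γ, rfl, rfl⟩, hI.2⟩

theorem liftMap_mem_realReach_of_mem_sliceReach (hJ : J ∈ Sph) {z : Fin n → ℂ}
    (hz : z ∈ sliceReach Ω J) : liftMap J z ∈ realReach Ω := by
  obtain ⟨x, hx, γ, hγ⟩ := hz
  have hγJ : J ∈ SUnits Ω γ.toContinuousMap := ⟨hJ, hγ⟩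
  exact ⟨γ.toContinuousMap, ⟨by simpa using hx, J, hγJ⟩, J, hγJ, by simp [liftP]⟩

theorem mem_sliceReach_of_liftMap_mem_realReach (hJ : J ∈ Sph) {z : Fin n → ℂ}
    (hz : liftMap J z ∈ realReach Ω) : z ∈ sliceReach Ω J := by
  obtain ⟨γ, ⟨hγ0, -⟩, I, hI, hγ1⟩ := hz
  have hjoin := joinedIn_of_mem_SUnits hI
  rcases liftMap_eq_liftMap_cases hI.1 hJ hγ1 with hzR | ⟨rfl, hw⟩ | ⟨rfl, hw⟩
  · have hzΩ : liftMap J z ∈ Ω := hγ1 ▸ hjoin.mem.2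
    exact ⟨z, hzR, JoinedIn.refl hzΩ⟩
  · exact ⟨γ 0, hγ0, hw ▸ hjoin⟩
  · refine ⟨γ 0, hγ0, ?_⟩
    have hconj := hjoin.map continuous_star
    rw [hγ0.star_eq, hw, star_star] at hconj
    refine hconj.mono ?_
    rintro _ ⟨w, hw, rfl⟩
    simpa [liftMap_neg] using hw

theorem liftMap_preimage_realReach (hJ : J ∈ Sph) :
    liftMap J ⁻¹' realReach Ω = sliceReach Ω J :=
  Set.ext fun _ => ⟨mem_sliceReach_of_liftMap_mem_realReach hJ,
    liftMap_mem_realReach_of_mem_sliceReach hJ⟩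

theorem sliceOpen_realReach (hΩ : SliceOpen Ω) : SliceOpen (realReach Ω) :=
  ⟨realReach_subset.trans hΩ.1, fun J hJ => by
    change IsOpen (liftMap J ⁻¹' realReach Ω)
    rw [liftMap_preimage_realReach hJ]
    exact (hΩ.2 J hJ).setOf_joinedIn _⟩

theorem sliceOpen_diff_realReach (hΩ : SliceOpen Ω) : SliceOpen (Ω \ realReach Ω) :=
  ⟨Set.sdiff_subset.trans hΩ.1, fun J hJ => by
    change IsOpen (liftMap J ⁻¹' Ω \ liftMap J ⁻¹' realReach Ω)
    rw [liftMap_preimage_realReach hJ]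
    exact (hΩ.2 J hJ).diff_setOf_joinedIn _⟩

theorem mem_realReach_of_isRealH (hΩ : SliceOpen Ω) {q : Fin n → Hq} (hq : q ∈ Ω)
    (hR : isRealH q) : q ∈ realReach Ω := by
  obtain ⟨I, hI, z, rfl⟩ := hΩ.1 hq
  exact liftMap_mem_realReach_of_mem_sliceReach hI
    ⟨z, isRealPt_of_isRealH_liftMap hI hR, JoinedIn.refl hq⟩

end Reach

/-- a slice-domain meeting `ℝⁿ` is real-path-connected. -/
theorem sliceDomain_realPathConnected {n : ℕ} (Ω : Set (Fin n → Hq))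
    (hΩ : SliceDomain Ω) (hR : ∃ q ∈ Ω, isRealH q) :
    RealPathConnected Ω := by
  obtain ⟨hopen, hconn⟩ := hΩ
  obtain ⟨q₀, hq₀, hq₀R⟩ := hR
  intro q hq
  by_contra hqR
  have hcover : Ω ⊆ realReach Ω ∪ (Ω \ realReach Ω) :=
    fun p hp => (em (p ∈ realReach Ω)).imp id fun h => ⟨hp, h⟩
  obtain ⟨p, ⟨-, hpR⟩, -, hpR'⟩ :=
    hconn _ _ (sliceOpen_realReach hopen) (sliceOpen_diff_realReach hopen) hcover
      ⟨q₀, hq₀, mem_realReach_of_isRealH hopen hq₀ hq₀R⟩ ⟨q, hq, hq, hqR⟩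
  exact hpR' hpR
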